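/- There is a surjective group homomorphism from the presented group H = ⟨a, b | a²b⁻³ = 1, ab⁻²ab⁻¹ab⁻¹a⁻¹b²a⁻¹b²a⁻¹ba⁻¹ = 1⟩ onto the presented group T = ⟨a, b | a² = 1, b³ = 1, (ab)⁵ = 1⟩ sending the generator a to a and the generator b to b. -/

import Mathlib

/-!
Modulo `a² = b³ = 1` the second relator of `H` is `a · b (ab⁻¹)⁵ b⁻¹ · a⁻¹`, and `ab⁻¹ = a (ab)⁻¹ a⁻¹`,
so it is a conjugate of `(ab)⁻⁵`. Hence both relators of `H` die in `T`, and the induced map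
`H → T` is onto because `T` is generated by `a` and `b`.
-/

/-- The relators of the presented group
`H = ⟨a, b | a²b⁻³, ab⁻²ab⁻¹ab⁻¹a⁻¹b²a⁻¹b²a⁻¹ba⁻¹⟩`. -/
def relsH : Set (FreeGroup (Fin 2)) :=
  letI a := FreeGroup.of (0 : Fin 2)
  letI b := FreeGroup.of (1 : Fin 2)
  {a * a * b⁻¹ * b⁻¹ * b⁻¹,
   a * b⁻¹ * b⁻¹ * a * b⁻¹ * a * b⁻¹ * a⁻¹ * b * b * a⁻¹ * b * b * a⁻¹ * b * a⁻¹}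

/-- The relators of the presented group `T = ⟨a, b | a², b³, (ab)⁵⟩`,
the (2,3,5) triangle group. -/
def relsT : Set (FreeGroup (Fin 2)) :=
  letI a := FreeGroup.of (0 : Fin 2)
  letI b := FreeGroup.of (1 : Fin 2)
  {a ^ 2, b ^ 3, (a * b) ^ 5}

namespace PresentedGroup

variable {α G : Type*} [Group G] {rels : Set (FreeGroup α)} {f : α → G}

theorem toGroup_surjective (h : ∀ r ∈ rels, FreeGroup.lift f r = 1)
    (hf : Subgroup.closure (Set.range f) = ⊤) : Function.Surjective (toGroup h) := by
  rw [← MonoidHom.range_eq_top, MonoidHom.range_eq_map, ← closure_range_of rels,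
    MonoidHom.map_closure, ← Set.range_comp]
  convert hf using 3
  exact funext fun _ => toGroup.of h

end PresentedGroup

theorem relator_eq_conj_inv_pow_five {G : Type*} [Group G] {a b : G} (ha : a ^ 2 = 1)
    (hb : b ^ 3 = 1) :
    a * b⁻¹ * b⁻¹ * a * b⁻¹ * a * b⁻¹ * a⁻¹ * b * b * a⁻¹ * b * b * a⁻¹ * b * a⁻¹ =
      (a * b * a) * ((a * b) ^ 5)⁻¹ * (a * b * a)⁻¹ := by
  rw [sq] at ha
  rw [pow_three] at hb
  have haa (x : G) : a * (a * x) = x := by rw [← mul_assoc, ha, one_mul]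
  have hbbb (x : G) : b * (b * (b * x)) = x := by
    rw [← mul_assoc, ← mul_assoc, mul_assoc b b b, hb, one_mul]
  have ha_inv : a⁻¹ = a := inv_eq_of_mul_eq_one_right ha
  have hb_inv : b⁻¹ = b * b := inv_eq_of_mul_eq_one_right hb
  rw [eq_mul_inv_iff_mul_eq, eq_mul_inv_iff_mul_eq]
  -- `a a → 1`, `b b b → 1` is confluent, and the identity already holds in `ℤ/2 ∗ ℤ/3`.
  simp only [pow_succ, pow_zero, one_mul, ha_inv, hb_inv, mul_one, mul_assoc, haa, hbbb, hb]

theorem lift_relsH_eq_one {G : Type*} [Group G] {f : Fin 2 → G} (ha : f 0 ^ 2 = 1)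
    (hb : f 1 ^ 3 = 1) (hab : (f 0 * f 1) ^ 5 = 1) : ∀ r ∈ relsH, FreeGroup.lift f r = 1 := by
  rintro r (rfl | rfl) <;> simp only [map_mul, map_inv, FreeGroup.lift_apply_of]
  · calc _ = f 0 ^ 2 * (f 1 ^ 3)⁻¹ := by simp only [sq, pow_three, mul_inv_rev, mul_assoc]
      _ = 1 := by rw [ha, hb, inv_one, one_mul]
  · rw [relator_eq_conj_inv_pow_five ha hb, hab, inv_one, mul_one, mul_inv_cancel]

/-- Adding the relations `a² = b³ = 1` to `H` gives `T`: there is a surjective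
homomorphism `H →* T` sending the generator `a` to `a` and `b` to `b`. -/
theorem exists_surjective_presentedGroupH_to_presentedGroupT :
    ∃ f : PresentedGroup relsH →* PresentedGroup relsT,
      Function.Surjective f ∧
      f (PresentedGroup.of 0) = PresentedGroup.of 0 ∧
      f (PresentedGroup.of 1) = PresentedGroup.of 1 := by
  have hrels : ∀ r ∈ relsH, FreeGroup.lift (PresentedGroup.of (rels := relsT)) r = 1 :=
    lift_relsH_eq_one (PresentedGroup.one_of_mem (by simp [relsT]))
      (PresentedGroup.one_of_mem (by simp [relsT])) (PresentedGroup.one_of_mem (by simp [relsT]))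
  exact ⟨PresentedGroup.toGroup hrels,
    PresentedGroup.toGroup_surjective hrels (PresentedGroup.closure_range_of relsT),
    PresentedGroup.toGroup.of hrels, PresentedGroup.toGroup.of hrels⟩
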